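/- Weitzenböck formula: for any $p$-form $\alpha$ on a pseudo-Riemannian manifold, $\square\alpha = \Delta\alpha + j^a i^b R(e_a,e_b)\alpha$, where $\square=-(d\delta+\delta d)$, $\Delta=\mathrm{tr}\,\nabla^2$ is the Laplace-Beltrami (connection) Laplacian, and $R(u,v)=\nabla_u\nabla_v-\nabla_v\nabla_u-\nabla_{[u,v]}$ is the curvature operator of the Levi-Civita connection. -/

import Mathlib

noncomputable section

/-- Partial derivative `∂_i f` in the canonical coordinates of `ℝ^d`. -/
def pdD {d : ℕ} (i : Fin d) (f : (Fin d → ℝ) → ℝ) (y : Fin d → ℝ) : ℝ :=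
  fderiv ℝ f y (Pi.single i 1)

/-- Christoffel symbols `Γ^k_{ij}` of the Levi-Civita connection of the metric `g`. -/
def christoffel {d : ℕ} (g : (Fin d → ℝ) → Matrix (Fin d) (Fin d) ℝ)
    (k i j : Fin d) (y : Fin d → ℝ) : ℝ :=
  (1 / 2) * ∑ l, (g y)⁻¹ k l *
    (pdD i (fun z => g z l j) y + pdD j (fun z => g z l i) y
      - pdD l (fun z => g z i j) y)

/-- Covariant derivative (Levi-Civita) of a covariant `p`-tensor, given by its
components: `(∇T)_{a I} = ∂_a T_I - ∑_m Γ^c_{a I_m} T_{I[m↦c]}`. -/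
def covD {d : ℕ} (g : (Fin d → ℝ) → Matrix (Fin d) (Fin d) ℝ) {p : ℕ}
    (T : (Fin p → Fin d) → (Fin d → ℝ) → ℝ) :
    (Fin (p + 1) → Fin d) → (Fin d → ℝ) → ℝ :=
  fun idx y => pdD (idx 0) (T (fun m => idx m.succ)) y
    - ∑ m : Fin p, ∑ c, christoffel g c (idx 0) (idx m.succ) y *
        T (Function.update (fun k => idx k.succ) m c) y

/-- Laplace-Beltrami (connection) Laplacian `Δ = tr ∇² = g^{ab} ∇²_{ab}` on
covariant `p`-tensors. -/
def lapBeltrami {d : ℕ} (g : (Fin d → ℝ) → Matrix (Fin d) (Fin d) ℝ) {p : ℕ}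
    (T : (Fin p → Fin d) → (Fin d → ℝ) → ℝ) :
    (Fin p → Fin d) → (Fin d → ℝ) → ℝ :=
  fun I y => ∑ a, ∑ b, (g y)⁻¹ a b *
    covD g (covD g T) (Fin.cons a (Fin.cons b I)) y

/-- Exterior derivative on `p`-forms (components):
`(dα)_J = ∑_i (-1)^i ∂_{J_i} α_{J∘ŝ_i}`. -/
def extd {d : ℕ} {p : ℕ} (α : (Fin p → Fin d) → (Fin d → ℝ) → ℝ) :
    (Fin (p + 1) → Fin d) → (Fin d → ℝ) → ℝ :=
  fun J y => ∑ i : Fin (p + 1), (-1) ^ (i : ℕ) * pdD (J i) (α (J ∘ i.succAbove)) y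

/-- Codifferential on `(p+1)`-forms (components): `(δα)_K = -g^{bc} (∇α)_{b c K}`. -/
def codiff {d : ℕ} (g : (Fin d → ℝ) → Matrix (Fin d) (Fin d) ℝ) {p : ℕ}
    (α : (Fin (p + 1) → Fin d) → (Fin d → ℝ) → ℝ) :
    (Fin p → Fin d) → (Fin d → ℝ) → ℝ :=
  fun K y => -∑ b, ∑ c, (g y)⁻¹ b c * covD g α (Fin.cons b (Fin.cons c K)) y

/-- The curvature term `j^a i^b R(e_a,e_b) α` of the Weitzenböck formula, written
in components (coordinate frame `e_a = ∂_a`, `i^b = g^{bc} i_{∂_c}`, `j^a = dx^a ∧`,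
and `R(∂_a,∂_b) = ∇²_{ab} - ∇²_{ba}` the curvature operator on forms): for an
alternating `α` it equals
`∑_{m,b,c} g^{bc} (R(∂_{I_m}, ∂_b) α)_{I[m↦c]}`. -/
def weitzCurvTerm {d : ℕ} (g : (Fin d → ℝ) → Matrix (Fin d) (Fin d) ℝ) {p : ℕ}
    (α : (Fin p → Fin d) → (Fin d → ℝ) → ℝ) :
    (Fin p → Fin d) → (Fin d → ℝ) → ℝ :=
  fun I y => ∑ b, ∑ c, ∑ m : Fin p, (g y)⁻¹ b c *
    (covD g (covD g α) (Fin.cons (I m) (Fin.cons b (Function.update I m c))) y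
      - covD g (covD g α) (Fin.cons b (Fin.cons (I m) (Function.update I m c))) y)

namespace Weitz
open Matrix
variable {d : ℕ} {g : (Fin d → ℝ) → Matrix (Fin d) (Fin d) ℝ}

lemma pdD_add {f g : (Fin d → ℝ) → ℝ} {y : Fin d → ℝ} (i : Fin d)
    (hf : DifferentiableAt ℝ f y) (hg : DifferentiableAt ℝ g y) :
    pdD i (fun z => f z + g z) y = pdD i f y + pdD i g y := by
  simp [pdD, fderiv_fun_add hf hg]

lemma pdD_neg {f : (Fin d → ℝ) → ℝ} {y : Fin d → ℝ} (i : Fin d) :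
    pdD i (fun z => -f z) y = -pdD i f y := by
  simp [pdD, fderiv_neg]

lemma pdD_sub {f g : (Fin d → ℝ) → ℝ} {y : Fin d → ℝ} (i : Fin d)
    (hf : DifferentiableAt ℝ f y) (hg : DifferentiableAt ℝ g y) :
    pdD i (fun z => f z - g z) y = pdD i f y - pdD i g y := by
  simp [pdD, fderiv_fun_sub hf hg]

lemma pdD_const_mul {f : (Fin d → ℝ) → ℝ} {y : Fin d → ℝ} (i : Fin d) (c : ℝ)
    (hf : DifferentiableAt ℝ f y) :
    pdD i (fun z => c * f z) y = c * pdD i f y := by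
  simp [pdD, fderiv_const_mul hf]

lemma pdD_const (i : Fin d) (c : ℝ) (y : Fin d → ℝ) :
    pdD i (fun _ => c) y = 0 := by
  simp [pdD]

lemma pdD_mul {f g : (Fin d → ℝ) → ℝ} {y : Fin d → ℝ} (i : Fin d)
    (hf : DifferentiableAt ℝ f y) (hg : DifferentiableAt ℝ g y) :
    pdD i (fun z => f z * g z) y = pdD i f y * g y + f y * pdD i g y := by
  simp [pdD, fderiv_fun_mul hf hg]; ring

lemma pdD_sum {ι : Type*} {s : Finset ι} {f : ι → (Fin d → ℝ) → ℝ} {y : Fin d → ℝ} (i : Fin d)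
    (hf : ∀ t ∈ s, DifferentiableAt ℝ (f t) y) :
    pdD i (fun z => ∑ t ∈ s, f t z) y = ∑ t ∈ s, pdD i (f t) y := by
  simp [pdD, fderiv_fun_sum hf]

lemma pdD_contDiff {f : (Fin d → ℝ) → ℝ} (i : Fin d) (hf : ContDiff ℝ (⊤ : ℕ∞) f) :
    ContDiff ℝ (⊤ : ℕ∞) (pdD i f) := by
  have h1 : ContDiff ℝ (⊤ : ℕ∞) (fderiv ℝ f) := hf.fderiv_right (by simp)
  exact (ContinuousLinearMap.apply ℝ ℝ (Pi.single i 1)).contDiff.comp h1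

lemma contDiff_finset_prod {ι : Type*} (s : Finset ι) (f : ι → (Fin d → ℝ) → ℝ)
    (hf : ∀ t ∈ s, ContDiff ℝ (⊤ : ℕ∞) (f t)) :
    ContDiff ℝ (⊤ : ℕ∞) (fun y => ∏ t ∈ s, f t y) := by
  classical
  induction s using Finset.induction_on with
  | empty => simpa using contDiff_const
  | @insert a s' hnotmem ih =>
    have : (fun y => ∏ t ∈ insert a s', f t y)
        = fun y => f a y * ∏ t ∈ s', f t y := by
      funext y; rw [Finset.prod_insert hnotmem]
    rw [this]
    exact (hf a (Finset.mem_insert_self a s')).mul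
      (ih fun t ht => hf t (Finset.mem_insert_of_mem ht))

lemma contDiff_det (M : (Fin d → ℝ) → Matrix (Fin d) (Fin d) ℝ)
    (hM : ∀ i j, ContDiff ℝ (⊤ : ℕ∞) (fun y => M y i j)) :
    ContDiff ℝ (⊤ : ℕ∞) (fun y => (M y).det) := by
  have : (fun y => (M y).det)
      = fun y => ∑ σ : Equiv.Perm (Fin d),
          ((Equiv.Perm.sign σ : ℤ) : ℝ) * ∏ i, M y (σ i) i := by
    funext y
    rw [Matrix.det_apply]
    congr 1; funext σ
    rw [Units.smul_def, zsmul_eq_mul]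
  rw [this]
  refine ContDiff.sum fun σ _ => ?_
  exact contDiff_const.mul (contDiff_finset_prod Finset.univ (fun i y => M y (σ i) i)
    (fun i _ => hM (σ i) i))

lemma ginv_contDiff (hsm : ∀ i j, ContDiff ℝ (⊤ : ℕ∞) (fun y => g y i j))
    (hdet : ∀ y, (g y).det ≠ 0) (b c : Fin d) :
    ContDiff ℝ (⊤ : ℕ∞) (fun y => (g y)⁻¹ b c) := by
  have hdet' : ContDiff ℝ (⊤ : ℕ∞) (fun y => (g y).det) := contDiff_det g hsm
  have : (fun y => (g y)⁻¹ b c)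
      = fun y => ((g y).det)⁻¹ * ((g y).updateRow c (Pi.single b 1)).det := by
    funext y
    rw [Matrix.inv_def, Matrix.smul_apply, Matrix.adjugate_apply,
      Ring.inverse_eq_inv, smul_eq_mul]
  rw [this]
  refine (hdet'.inv hdet).mul (contDiff_det _ fun i j => ?_)
  rcases eq_or_ne i c with rfl | h
  · simpa using contDiff_const
  · have : (fun y => ((g y).updateRow c (Pi.single b 1)) i j) = fun y => g y i j := by
      funext y; rw [Matrix.updateRow_ne h]
    rw [this]; exact hsm i j

lemma ginv_symm (hsym : ∀ y i j, g y i j = g y j i) (y : Fin d → ℝ) (b c : Fin d) :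
    (g y)⁻¹ b c = (g y)⁻¹ c b := by
  have hT : (g y)ᵀ = g y := by
    ext i j; simp [Matrix.transpose_apply, hsym y j i]
  conv_lhs => rw [← hT, ← Matrix.transpose_nonsing_inv]
  rw [Matrix.transpose_apply]

lemma ginv_mul_self (hdet : ∀ y, (g y).det ≠ 0) (y : Fin d → ℝ) (b c : Fin d) :
    ∑ k, (g y)⁻¹ b k * g y k c = if b = c then 1 else 0 := by
  have h := Matrix.nonsing_inv_mul (g y) (isUnit_iff_ne_zero.2 (hdet y))
  have := congrArg (fun M => M b c) h
  simpa [Matrix.mul_apply, Matrix.one_apply] using this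

lemma self_mul_ginv (hdet : ∀ y, (g y).det ≠ 0) (y : Fin d → ℝ) (b c : Fin d) :
    ∑ k, g y b k * (g y)⁻¹ k c = if b = c then 1 else 0 := by
  have h := Matrix.mul_nonsing_inv (g y) (isUnit_iff_ne_zero.2 (hdet y))
  have := congrArg (fun M => M b c) h
  simpa [Matrix.mul_apply, Matrix.one_apply] using this

lemma pdD_ginv (hsm : ∀ i j, ContDiff ℝ (⊤ : ℕ∞) (fun y => g y i j))
    (hdet : ∀ y, (g y).det ≠ 0) (a b c : Fin d) (y : Fin d → ℝ) :
    pdD a (fun z => (g z)⁻¹ b c) y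
      = -∑ k, ∑ l, (g y)⁻¹ b k * pdD a (fun z => g z k l) y * (g y)⁻¹ l c := by
  classical
  have hdg : ∀ i j, DifferentiableAt ℝ (fun z => g z i j) y :=
    fun i j => ((hsm i j).differentiable (by simp)).differentiableAt
  have hdGi : ∀ i j, DifferentiableAt ℝ (fun z => (g z)⁻¹ i j) y :=
    fun i j => (((ginv_contDiff hsm hdet i j)).differentiable (by simp)).differentiableAt
  have key : ∀ l, ∑ k, (pdD a (fun z => (g z)⁻¹ b k) y * g y k l
      + (g y)⁻¹ b k * pdD a (fun z => g z k l) y) = 0 := by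
    intro l
    have h1 : (fun z => ∑ k, (g z)⁻¹ b k * g z k l)
        = fun _ => if b = l then (1:ℝ) else 0 := by
      funext z; exact ginv_mul_self hdet z b l
    have h2 : pdD a (fun z => ∑ k, (g z)⁻¹ b k * g z k l) y = 0 := by
      rw [h1]; exact pdD_const a _ y
    rw [pdD_sum a (fun k _ => ((hdGi b k).fun_mul (hdg k l)))] at h2
    calc ∑ k, (pdD a (fun z => (g z)⁻¹ b k) y * g y k l
          + (g y)⁻¹ b k * pdD a (fun z => g z k l) y)
        = ∑ k, pdD a (fun z => (g z)⁻¹ b k * g z k l) y := by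
          refine Finset.sum_congr rfl fun k _ => ?_
          rw [pdD_mul a (hdGi b k) (hdg k l)]
      _ = 0 := h2
  have expand : ∑ l, (∑ k, (pdD a (fun z => (g z)⁻¹ b k) y * g y k l
      + (g y)⁻¹ b k * pdD a (fun z => g z k l) y)) * (g y)⁻¹ l c = 0 := by
    simp only [key, zero_mul, Finset.sum_const_zero]
  have lhs1 : ∑ l, (∑ k, pdD a (fun z => (g z)⁻¹ b k) y * g y k l) * (g y)⁻¹ l c
      = pdD a (fun z => (g z)⁻¹ b c) y := by
    calc ∑ l, (∑ k, pdD a (fun z => (g z)⁻¹ b k) y * g y k l) * (g y)⁻¹ l c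
        = ∑ k, ∑ l, pdD a (fun z => (g z)⁻¹ b k) y * (g y k l * (g y)⁻¹ l c) := by
          simp only [Finset.sum_mul]
          rw [Finset.sum_comm]
          simp only [mul_assoc]
      _ = ∑ k, pdD a (fun z => (g z)⁻¹ b k) y * (if k = c then 1 else 0) := by
          refine Finset.sum_congr rfl fun k _ => ?_
          rw [← Finset.mul_sum, self_mul_ginv hdet y k c]
      _ = pdD a (fun z => (g z)⁻¹ b c) y := by simp
  rw [Finset.sum_congr rfl (fun l _ => by rw [Finset.sum_add_distrib, add_mul]),
    Finset.sum_add_distrib, lhs1] at expand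
  have h3 : ∑ l, (∑ k, (g y)⁻¹ b k * pdD a (fun z => g z k l) y) * (g y)⁻¹ l c
      = ∑ k, ∑ l, (g y)⁻¹ b k * pdD a (fun z => g z k l) y * (g y)⁻¹ l c := by
    simp only [Finset.sum_mul]
    rw [Finset.sum_comm]
  rw [h3] at expand
  linarith

lemma christoffel_symm (hsym : ∀ y i j, g y i j = g y j i) (e i j : Fin d) (y : Fin d → ℝ) :
    christoffel g e i j y = christoffel g e j i y := by
  unfold christoffel
  congr 1
  refine Finset.sum_congr rfl fun l _ => ?_
  congr 1
  have h : (fun z => g z i j) = (fun z => g z j i) := funext fun z => hsym z i j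
  rw [h]
  ring

lemma christoffel_contDiff (hsm : ∀ i j, ContDiff ℝ (⊤ : ℕ∞) (fun y => g y i j))
    (hdet : ∀ y, (g y).det ≠ 0) (e i j : Fin d) :
    ContDiff ℝ (⊤ : ℕ∞) (christoffel g e i j) := by
  unfold christoffel
  refine contDiff_const.mul (ContDiff.sum fun l _ => (ginv_contDiff hsm hdet e l).mul ?_)
  exact ((pdD_contDiff i (hsm l j)).add (pdD_contDiff j (hsm l i))).sub (pdD_contDiff l (hsm i j))

lemma compat (hsym : ∀ y i j, g y i j = g y j i)
    (hsm : ∀ i j, ContDiff ℝ (⊤ : ℕ∞) (fun y => g y i j))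
    (hdet : ∀ y, (g y).det ≠ 0) (a b c : Fin d) (y : Fin d → ℝ) :
    pdD a (fun z => (g z)⁻¹ b c) y
      = -∑ e, (christoffel g b a e y * (g y)⁻¹ e c
          + christoffel g c a e y * (g y)⁻¹ b e) := by
  classical
  have hGsym : ∀ i j, (g y)⁻¹ i j = (g y)⁻¹ j i := fun i j => ginv_symm hsym y i j
  have hD : ∀ i j k : Fin d, pdD i (fun z => g z j k) y = pdD i (fun z => g z k j) y := by
    intro i j k
    have h : (fun z => g z j k) = (fun z => g z k j) := funext fun z => hsym z j k
    rw [h]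
  rw [pdD_ginv hsm hdet, neg_inj]
  unfold christoffel
  have expand1 : ∑ e, ((1/2 : ℝ) * ∑ l, (g y)⁻¹ b l *
        (pdD a (fun z => g z l e) y + pdD e (fun z => g z l a) y
          - pdD l (fun z => g z a e) y)) * (g y)⁻¹ e c
      = ∑ e, ∑ l, (1/2 : ℝ) * ((g y)⁻¹ b l *
        (pdD a (fun z => g z l e) y + pdD e (fun z => g z l a) y
          - pdD l (fun z => g z a e) y) * (g y)⁻¹ e c) := by
    refine Finset.sum_congr rfl fun e _ => ?_
    rw [mul_comm ((1:ℝ)/2), mul_assoc, Finset.sum_mul]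
    refine Finset.sum_congr rfl fun l _ => ?_
    ring
  have expand2 : ∑ e, ((1/2 : ℝ) * ∑ l, (g y)⁻¹ c l *
        (pdD a (fun z => g z l e) y + pdD e (fun z => g z l a) y
          - pdD l (fun z => g z a e) y)) * (g y)⁻¹ b e
      = ∑ e, ∑ l, (1/2 : ℝ) * ((g y)⁻¹ c l *
        (pdD a (fun z => g z l e) y + pdD e (fun z => g z l a) y
          - pdD l (fun z => g z a e) y) * (g y)⁻¹ b e) := by
    refine Finset.sum_congr rfl fun e _ => ?_
    rw [mul_comm ((1:ℝ)/2), mul_assoc, Finset.sum_mul]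
    refine Finset.sum_congr rfl fun l _ => ?_
    ring
  calc ∑ k, ∑ l, (g y)⁻¹ b k * pdD a (fun z => g z k l) y * (g y)⁻¹ l c
      = ∑ e, ∑ l, (g y)⁻¹ b l * pdD a (fun z => g z l e) y * (g y)⁻¹ e c := by
        rw [Finset.sum_comm]
    _ = ∑ e, ∑ l, ((1/2 : ℝ) * ((g y)⁻¹ b l *
          (pdD a (fun z => g z l e) y + pdD e (fun z => g z l a) y
            - pdD l (fun z => g z a e) y) * (g y)⁻¹ e c)
        + (1/2 : ℝ) * ((g y)⁻¹ c e *
          (pdD a (fun z => g z e l) y + pdD l (fun z => g z e a) y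
            - pdD e (fun z => g z a l) y) * (g y)⁻¹ b l)) := by
        refine Finset.sum_congr rfl fun e _ => Finset.sum_congr rfl fun l _ => ?_
        rw [hD a e l, hD l e a, hD e a l, hGsym c e]
        ring
    _ = ∑ e, (((1/2 : ℝ) * ∑ l, (g y)⁻¹ b l *
          (pdD a (fun z => g z l e) y + pdD e (fun z => g z l a) y
            - pdD l (fun z => g z a e) y)) * (g y)⁻¹ e c
        + ((1/2 : ℝ) * ∑ l, (g y)⁻¹ c l *
          (pdD a (fun z => g z l e) y + pdD e (fun z => g z l a) y
            - pdD l (fun z => g z a e) y)) * (g y)⁻¹ b e) := by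
        simp only [Finset.sum_add_distrib]
        congr 1
        · exact expand1.symm
        · rw [expand2]
          rw [Finset.sum_comm]

section Perm

open Equiv

variable {q : ℕ} {X : Type*}

lemma update_comp_perm (K : Fin q → X) (σ : Equiv.Perm (Fin q)) (m : Fin q) (c : X) :
    Function.update (K ∘ σ) m c = (Function.update K (σ m) c) ∘ σ :=
  (Function.update_comp_eq_of_injective K σ.injective m c).symm

lemma update_comp_succAbove (J : Fin (q + 1) → X) (i : Fin (q + 1)) (m : Fin q) (e : X) :
    Function.update (J ∘ i.succAbove) m e = (Function.update J (i.succAbove m) e) ∘ i.succAbove :=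
  (Function.update_comp_eq_of_injective J (Fin.succAbove_right_injective (p := i)) m e).symm

/-- Extension of a permutation of `Fin q` to `Fin (q+1)` fixing `0`. -/
def ext0 (σ : Equiv.Perm (Fin q)) : Equiv.Perm (Fin (q + 1)) :=
  (Equiv.permCongr (finSuccEquiv q).symm) σ.optionCongr

@[simp] lemma ext0_zero (σ : Equiv.Perm (Fin q)) : ext0 σ 0 = 0 := by
  simp [ext0, Equiv.permCongr_apply]

@[simp] lemma ext0_succ (σ : Equiv.Perm (Fin q)) (m : Fin q) : ext0 σ m.succ = (σ m).succ := by
  simp [ext0, Equiv.permCongr_apply]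

lemma sign_ext0 (σ : Equiv.Perm (Fin q)) : Equiv.Perm.sign (ext0 σ) = Equiv.Perm.sign σ := by
  unfold ext0
  rw [Equiv.Perm.sign_permCongr, Equiv.optionCongr_sign]

lemma cons_comp_ext0 (a : X) (K : Fin q → X) (σ : Equiv.Perm (Fin q)) :
    (Fin.cons a K : Fin (q + 1) → X) ∘ (ext0 σ) = Fin.cons a (K ∘ σ) := by
  funext m
  cases m using Fin.cases with
  | zero => simp
  | succ k => simp

lemma comp_cycleRange_inv (A : Fin (q + 1) → X) (m : Fin (q + 1)) :
    A ∘ ⇑(m.cycleRange⁻¹) = Fin.cons (A m) (A ∘ m.succAbove) := by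
  funext k
  cases k using Fin.cases with
  | zero =>
    have : m.cycleRange⁻¹ (0 : Fin (q + 1)) = m := by
      simp [Equiv.Perm.inv_def]
    simp [this]
  | succ k =>
    have : m.cycleRange⁻¹ k.succ = m.succAbove k := by
      simp [Equiv.Perm.inv_def]
    simp [this]

lemma tail_comp_ext0 (J : Fin (q + 1) → X) (σ : Equiv.Perm (Fin q)) :
    (fun m => (J ∘ ext0 σ) m.succ) = (fun m => J m.succ) ∘ σ := by
  funext m; simp

end Perm

section CovD

variable {q : ℕ}

lemma covD_contDiff (hsm : ∀ i j, ContDiff ℝ (⊤ : ℕ∞) (fun y => g y i j))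
    (hdet : ∀ y, (g y).det ≠ 0)
    (T : (Fin q → Fin d) → (Fin d → ℝ) → ℝ) (hT : ∀ K, ContDiff ℝ (⊤ : ℕ∞) (T K))
    (J : Fin (q + 1) → Fin d) : ContDiff ℝ (⊤ : ℕ∞) (fun y => covD g T J y) := by
  simp only [covD]
  refine (pdD_contDiff _ (hT _)).sub
    (ContDiff.sum fun m _ => ContDiff.sum fun c _ => ?_)
  exact (christoffel_contDiff hsm hdet c _ _).mul (hT _)

lemma covD_comp_perm (T : (Fin q → Fin d) → (Fin d → ℝ) → ℝ) (σ : Equiv.Perm (Fin q))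
    (J : Fin (q + 1) → Fin d) (y : Fin d → ℝ) :
    covD g (fun K => T (K ∘ σ)) J y = covD g T (J ∘ ext0 σ) y := by
  unfold covD
  have h0 : (J ∘ ext0 σ) 0 = J 0 := by simp
  rw [tail_comp_ext0, h0]
  congr 1
  calc ∑ m, ∑ c, christoffel g c (J 0) (J m.succ) y *
        (fun K => T (K ∘ ⇑σ)) (Function.update (fun k => J k.succ) m c) y
      = ∑ m, ∑ c, christoffel g c (J 0) (J (σ m).succ) y *
        T ((Function.update (fun k => J k.succ) (σ m) c) ∘ ⇑σ) y :=
        (Equiv.sum_comp σ (fun m' => ∑ c, christoffel g c (J 0) (J m'.succ) y *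
          T ((Function.update (fun k => J k.succ) m' c) ∘ ⇑σ) y)).symm
    _ = ∑ m, ∑ c, christoffel g c (J 0) ((J ∘ ⇑(ext0 σ)) m.succ) y *
        T (Function.update ((fun m => J m.succ) ∘ ⇑σ) m c) y := by
        refine Finset.sum_congr rfl fun m _ => Finset.sum_congr rfl fun c _ => ?_
        rw [update_comp_perm (fun k => J k.succ) σ m c]
        simp

lemma covD_skew (S : (Fin q → Fin d) → (Fin d → ℝ) → ℝ)
    (hS : ∀ K y, DifferentiableAt ℝ (S K) y)
    (τ : Equiv.Perm (Fin q)) (ε : ℝ)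
    (h : ∀ K y, S (K ∘ τ) y = ε * S K y)
    (J : Fin (q + 1) → Fin d) (y : Fin d → ℝ) :
    covD g S (J ∘ ext0 τ) y = ε * covD g S J y := by
  have hfun : ∀ K : Fin q → Fin d, S (K ∘ τ) = fun y => ε * S K y :=
    fun K => funext fun y => h K y
  unfold covD
  rw [tail_comp_ext0]
  have h0 : (J ∘ ext0 τ) 0 = J 0 := by simp
  rw [h0, hfun (fun m => J m.succ), pdD_const_mul _ ε (hS _ y)]
  have hΓ : ∑ m, ∑ c, christoffel g c (J 0) ((J ∘ ⇑(ext0 τ)) m.succ) y *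
        S (Function.update ((fun m => J m.succ) ∘ ⇑τ) m c) y
      = ε * ∑ m, ∑ c, christoffel g c (J 0) (J m.succ) y *
        S (Function.update (fun m => J m.succ) m c) y := by
    calc ∑ m, ∑ c, christoffel g c (J 0) ((J ∘ ⇑(ext0 τ)) m.succ) y *
          S (Function.update ((fun m => J m.succ) ∘ ⇑τ) m c) y
        = ∑ m, ∑ c, christoffel g c (J 0) (J (τ m).succ) y *
          (ε * S (Function.update (fun m => J m.succ) (τ m) c) y) := by
          refine Finset.sum_congr rfl fun m _ => Finset.sum_congr rfl fun c _ => ?_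
          rw [update_comp_perm (fun m => J m.succ) τ m c, h]
          simp
      _ = ∑ m, ∑ c, christoffel g c (J 0) (J m.succ) y *
          (ε * S (Function.update (fun m => J m.succ) m c) y) :=
          Equiv.sum_comp τ (fun m' => ∑ c, christoffel g c (J 0) (J m'.succ) y *
            (ε * S (Function.update (fun m => J m.succ) m' c) y))
      _ = ε * ∑ m, ∑ c, christoffel g c (J 0) (J m.succ) y *
          S (Function.update (fun m => J m.succ) m c) y := by
          rw [Finset.mul_sum]
          refine Finset.sum_congr rfl fun m _ => ?_
          rw [Finset.mul_sum]
          refine Finset.sum_congr rfl fun c _ => ?_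
          ring
  rw [hΓ]
  ring

lemma covD_sum {ι : Type*} (s : Finset ι) (f : ι → (Fin q → Fin d) → (Fin d → ℝ) → ℝ)
    (hf : ∀ t K y, DifferentiableAt ℝ (f t K) y)
    (J : Fin (q + 1) → Fin d) (y : Fin d → ℝ) :
    covD g (fun K y => ∑ t ∈ s, f t K y) J y = ∑ t ∈ s, covD g (f t) J y := by
  unfold covD
  rw [pdD_sum _ (fun t _ => hf t _ y), Finset.sum_sub_distrib]
  congr 1
  calc ∑ m, ∑ c, christoffel g c (J 0) (J m.succ) y *
        ∑ t ∈ s, f t (Function.update (fun k => J k.succ) m c) y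
      = ∑ m, ∑ c, ∑ t ∈ s, christoffel g c (J 0) (J m.succ) y *
        f t (Function.update (fun k => J k.succ) m c) y := by
        simp_rw [Finset.mul_sum]
    _ = ∑ t ∈ s, ∑ m, ∑ c, christoffel g c (J 0) (J m.succ) y *
        f t (Function.update (fun k => J k.succ) m c) y := by
        rw [Finset.sum_congr rfl fun m (_ : m ∈ Finset.univ) => Finset.sum_comm]
        rw [Finset.sum_comm]

end CovD

section Swap

lemma coe_succAbove {q : ℕ} (i : Fin (q + 1)) (k : Fin q) :
    (i.succAbove k : ℕ) = if (k : ℕ) < (i : ℕ) then (k : ℕ) else (k : ℕ) + 1 := by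
  rw [Fin.succAbove]
  rcases lt_or_ge ((k : ℕ)) ((i : ℕ)) with h | h
  · rw [if_pos (by simpa [Fin.lt_def] using h), if_pos h]; rfl
  · rw [if_neg (by simpa [Fin.lt_def, not_lt] using h), if_neg (by omega)]; rfl

lemma double_del {r : ℕ} {i j : Fin (r + 2)} {m₁ m₂ : Fin (r + 1)}
    (hij : i ≠ j) (hm₁ : i.succAbove m₁ = j) (hm₂ : j.succAbove m₂ = i) (k : Fin r) :
    i.succAbove (m₁.succAbove k) = j.succAbove (m₂.succAbove k) := by
  have h1 := congrArg Fin.val hm₁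
  have h2 := congrArg Fin.val hm₂
  rw [coe_succAbove] at h1 h2
  have hij' : (i : ℕ) ≠ (j : ℕ) := fun h => hij (Fin.ext h)
  have b1 := i.is_lt; have b2 := j.is_lt; have b3 := m₁.is_lt
  have b4 := m₂.is_lt; have b5 := k.is_lt
  apply Fin.ext
  rw [coe_succAbove, coe_succAbove, coe_succAbove, coe_succAbove]
  split_ifs at h1 h2 ⊢ <;> omega

lemma double_del_sign {r : ℕ} {i j : Fin (r + 2)} {m₁ m₂ : Fin (r + 1)}
    (hij : i ≠ j) (hm₁ : i.succAbove m₁ = j) (hm₂ : j.succAbove m₂ = i) :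
    (m₁ : ℕ) + (m₂ : ℕ) + 1 = (i : ℕ) + (j : ℕ) := by
  have h1 := congrArg Fin.val hm₁
  have h2 := congrArg Fin.val hm₂
  rw [coe_succAbove] at h1 h2
  have hij' : (i : ℕ) ≠ (j : ℕ) := fun h => hij (Fin.ext h)
  split_ifs at h1 h2 <;> omega

lemma swap_del {r : ℕ} (β : (Fin (r + 1) → Fin d) → (Fin d → ℝ) → ℝ)
    (hβ : ∀ (σ : Equiv.Perm (Fin (r + 1))) K y,
      β (K ∘ σ) y = ((Equiv.Perm.sign σ : ℤ) : ℝ) * β K y)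
    (W : Fin (r + 2) → Fin d) (i j : Fin (r + 2)) (hij : i ≠ j) (hW : W i = W j)
    (y : Fin d → ℝ) :
    β (W ∘ i.succAbove) y
      = -((-1 : ℝ) ^ ((i : ℕ) + (j : ℕ))) * β (W ∘ j.succAbove) y := by
  obtain ⟨m₁, hm₁⟩ := Fin.exists_succAbove_eq hij.symm
  obtain ⟨m₂, hm₂⟩ := Fin.exists_succAbove_eq hij
  have hsum := double_del_sign hij hm₁ hm₂
  -- the common doubly-deleted tuple
  have hC : (W ∘ i.succAbove) ∘ m₁.succAbove = (W ∘ j.succAbove) ∘ m₂.succAbove := by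
    funext k
    have := double_del hij hm₁ hm₂ k
    simp only [Function.comp_apply]
    rw [this]
  -- decompose W∘ŝ_i through cycleRange m₁
  have e1 : W ∘ i.succAbove
      = (Fin.cons (W j) ((W ∘ i.succAbove) ∘ m₁.succAbove) : Fin (r+1) → Fin d)
        ∘ ⇑(m₁.cycleRange) := by
    have h := comp_cycleRange_inv (W ∘ i.succAbove) m₁
    have h2 : (W ∘ i.succAbove) m₁ = W j := by
      simp only [Function.comp_apply, hm₁]
    rw [h2] at h
    funext k
    have := congrFun h (m₁.cycleRange k)
    simpa using this
  have e2 : W ∘ j.succAbove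
      = (Fin.cons (W j) ((W ∘ i.succAbove) ∘ m₁.succAbove) : Fin (r+1) → Fin d)
        ∘ ⇑(m₂.cycleRange) := by
    have h := comp_cycleRange_inv (W ∘ j.succAbove) m₂
    have h2 : (W ∘ j.succAbove) m₂ = W j := by
      simp only [Function.comp_apply, hm₂, hW]
    rw [h2, ← hC] at h
    funext k
    have := congrFun h (m₂.cycleRange k)
    simpa using this
  rw [e1, e2, hβ, hβ]
  rw [Fin.sign_cycleRange, Fin.sign_cycleRange]
  have hc : ∀ n : ℕ, ((((-1 : ℤˣ) ^ n : ℤˣ) : ℤ) : ℝ) = (-1 : ℝ) ^ n := by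
    intro n
    rcases Nat.even_or_odd n with h | h
    · rw [Even.neg_one_pow h, Even.neg_one_pow h]; simp
    · rw [Odd.neg_one_pow h, Odd.neg_one_pow h]; simp
  rw [hc, hc]
  have hpow : -(-1 : ℝ) ^ ((i : ℕ) + (j : ℕ)) * (-1 : ℝ) ^ (m₂ : ℕ)
      = (-1 : ℝ) ^ (m₁ : ℕ) := by
    rw [← hsum, pow_add, pow_add, pow_one]
    have h1 : (-1 : ℝ) ^ (m₂ : ℕ) * (-1 : ℝ) ^ (m₂ : ℕ) = 1 := by
      rw [← pow_add]; exact Even.neg_one_pow ⟨_, rfl⟩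
    linear_combination ((-1:ℝ)^(m₁ : ℕ)) * h1
  rw [← hpow]
  ring

end Swap

section Claim1

lemma update_del {q : ℕ} {X : Type*} (J : Fin (q + 1) → X) (i : Fin (q + 1)) (c : X) :
    (Function.update J i c) ∘ i.succAbove = J ∘ i.succAbove := by
  funext k
  simp [Function.update_of_ne (Fin.succAbove_ne i k)]

lemma extd_eq_alt {q : ℕ} (hsym : ∀ y i j, g y i j = g y j i)
    (β : (Fin q → Fin d) → (Fin d → ℝ) → ℝ)
    (hβ : ∀ (σ : Equiv.Perm (Fin q)) K y,
      β (K ∘ σ) y = ((Equiv.Perm.sign σ : ℤ) : ℝ) * β K y)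
    (J : Fin (q + 1) → Fin d) (y : Fin d → ℝ) :
    extd β J y = ∑ i : Fin (q + 1), (-1 : ℝ) ^ (i : ℕ) *
      covD g β (Fin.cons (J i) (J ∘ i.succAbove)) y := by
  classical
  unfold extd covD
  simp only [Fin.cons_zero, Fin.cons_succ]
  simp only [mul_sub]
  rw [Finset.sum_sub_distrib]
  symm
  rw [sub_eq_self]
  -- the Christoffel terms cancel by antisymmetry
  set F : Fin (q + 1) → Fin (q + 1) → ℝ := fun i j => ∑ c,
    christoffel g c (J i) (J j) y * β ((Function.update J j c) ∘ i.succAbove) y with hF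
  have step1 : ∀ i : Fin (q + 1),
      (∑ m : Fin q, ∑ c, christoffel g c (J i) ((J ∘ i.succAbove) m) y *
        β (Function.update (J ∘ i.succAbove) m c) y) = (∑ j, F i j) - F i i := by
    intro i
    have e : ∀ m : Fin q, F i (i.succAbove m)
        = ∑ c, christoffel g c (J i) ((J ∘ i.succAbove) m) y *
          β (Function.update (J ∘ i.succAbove) m c) y := by
      intro m
      refine Finset.sum_congr rfl fun c _ => ?_
      rw [update_comp_succAbove J i m c]
      rfl
    calc ∑ m : Fin q, ∑ c, christoffel g c (J i) ((J ∘ i.succAbove) m) y *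
          β (Function.update (J ∘ i.succAbove) m c) y
        = ∑ m : Fin q, F i (i.succAbove m) := by
          refine Finset.sum_congr rfl fun m _ => (e m).symm
      _ = (∑ j, F i j) - F i i := by
          rw [Fin.sum_univ_succAbove (F i) i]; ring
  calc ∑ i : Fin (q + 1), (-1 : ℝ) ^ (i : ℕ) *
        ∑ m : Fin q, ∑ c, christoffel g c (J i) ((J ∘ i.succAbove) m) y *
          β (Function.update (J ∘ i.succAbove) m c) y
      = ∑ i : Fin (q + 1), ((-1 : ℝ) ^ (i : ℕ) * ∑ j, F i j
          - (-1 : ℝ) ^ (i : ℕ) * F i i) := by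
        refine Finset.sum_congr rfl fun i _ => ?_
        rw [step1 i]; ring
    _ = ∑ i : Fin (q + 1), ∑ j : Fin (q + 1), (-1 : ℝ) ^ (i : ℕ) * F i j
          - ∑ i : Fin (q + 1), (-1 : ℝ) ^ (i : ℕ) * F i i := by
        rw [Finset.sum_sub_distrib]
        congr 1
        exact Finset.sum_congr rfl fun i _ => Finset.mul_sum _ _ _
    _ = ∑ p ∈ ((Finset.univ ×ˢ Finset.univ) :
            Finset (Fin (q + 1) × Fin (q + 1))), (-1 : ℝ) ^ (p.1 : ℕ) * F p.1 p.2
        - ∑ i : Fin (q + 1), (-1 : ℝ) ^ (i : ℕ) * F i i := by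
        rw [Finset.sum_product]
    _ = ∑ p ∈ (Finset.univ : Finset (Fin (q+1))).offDiag,
          (-1 : ℝ) ^ (p.1 : ℕ) * F p.1 p.2 := by
        rw [← Finset.diag_union_offDiag (Finset.univ : Finset (Fin (q+1))),
          Finset.sum_union (Finset.disjoint_diag_offDiag _), Finset.sum_diag]
        ring
    _ = 0 := by
        cases q with
        | zero =>
          have : (Finset.univ : Finset (Fin 1)).offDiag = ∅ := by decide
          rw [this, Finset.sum_empty]
        | succ r =>
          refine Finset.sum_involution (fun p _ => p.swap) ?_ ?_ ?_ ?_
          · rintro ⟨i, j⟩ hp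
            have hij : i ≠ j := (Finset.mem_offDiag.mp hp).2.2
            show (-1:ℝ)^(i:ℕ) * F i j + (-1:ℝ)^(j:ℕ) * F j i = 0
            simp only [hF]
            rw [Finset.mul_sum, Finset.mul_sum, ← Finset.sum_add_distrib]
            refine Finset.sum_eq_zero fun c _ => ?_
            set W := Function.update (Function.update J j c) i c with hW
            have hWij : W i = W j := by
              rw [hW, Function.update_self, Function.update_of_ne hij.symm,
                Function.update_self]
            have h1 : (Function.update J j c) ∘ i.succAbove = W ∘ i.succAbove :=
              (update_del (Function.update J j c) i c).symm
            have h2 : (Function.update J i c) ∘ j.succAbove = W ∘ j.succAbove := by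
              rw [hW, Function.update_comm hij.symm, update_del]
            rw [h1, h2, swap_del β hβ W i j hij hWij y,
              christoffel_symm hsym c (J j) (J i)]
            have he : (-1:ℝ)^((i:ℕ)) * (-1:ℝ)^((i:ℕ)+(j:ℕ)) = (-1:ℝ)^((j:ℕ)) := by
              rw [pow_add, ← mul_assoc, ← pow_add]
              have hev : Even ((i:ℕ) + (i:ℕ)) := ⟨_, rfl⟩
              rw [Even.neg_one_pow hev, one_mul]
            linear_combination (-(christoffel g c (J i) (J j) y
              * β (W ∘ j.succAbove) y)) * he
          · rintro ⟨i, j⟩ hp _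
            have hij : i ≠ j := (Finset.mem_offDiag.mp hp).2.2
            exact fun h => hij (congrArg Prod.snd h)
          · rintro ⟨i, j⟩ hp
            have hij : i ≠ j := (Finset.mem_offDiag.mp hp).2.2
            exact Finset.mem_offDiag.mpr ⟨Finset.mem_univ _, Finset.mem_univ _, hij.symm⟩
          · rintro ⟨i, j⟩ hp
            rfl

end Claim1

section Level2

lemma units_cast_pow (n : ℕ) : ((((-1 : ℤˣ) ^ n : ℤˣ) : ℤ) : ℝ) = (-1 : ℝ) ^ n := by
  rcases Nat.even_or_odd n with h | h
  · rw [Even.neg_one_pow h, Even.neg_one_pow h]; simp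
  · rw [Odd.neg_one_pow h, Odd.neg_one_pow h]; simp

lemma sum3_swap13 {M : Type*} [AddCommMonoid M] {ι : Type*} [Fintype ι] (f : ι → ι → ι → M) :
    ∑ b, ∑ c, ∑ e, f b c e = ∑ e, ∑ c, ∑ b, f b c e := by
  rw [Finset.sum_congr rfl fun b (_ : b ∈ Finset.univ) => Finset.sum_comm, Finset.sum_comm]
  exact Finset.sum_congr rfl fun e _ => Finset.sum_comm

lemma cons_comp_succ {q : ℕ} {X : Type*} (c : X) (I : Fin (q + 1) → X) (j : Fin (q + 1)) :
    (Fin.cons c I : Fin (q + 2) → X) ∘ (j.succ).succAbove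
      = Fin.cons c (I ∘ j.succAbove) := by
  funext k
  cases k using Fin.cases with
  | zero => simp [Fin.succ_succAbove_zero]
  | succ k => simp [Fin.succ_succAbove_succ]

lemma cons_comp_zero {q : ℕ} {X : Type*} (c : X) (I : Fin (q + 1) → X) :
    (Fin.cons c I : Fin (q + 2) → X) ∘ (0 : Fin (q + 2)).succAbove = I := by
  funext k
  simp [Fin.succAbove_zero]

variable {q : ℕ}

lemma covD_const_mul (S : (Fin q → Fin d) → (Fin d → ℝ) → ℝ)
    (hS : ∀ K y, DifferentiableAt ℝ (S K) y) (ε : ℝ)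
    (J : Fin (q + 1) → Fin d) (y : Fin d → ℝ) :
    covD g (fun K y => ε * S K y) J y = ε * covD g S J y := by
  unfold covD
  rw [pdD_const_mul _ ε (hS _ y), mul_sub]
  congr 1
  rw [Finset.mul_sum]
  refine Finset.sum_congr rfl fun m _ => ?_
  rw [Finset.mul_sum]
  refine Finset.sum_congr rfl fun c _ => ?_
  ring

/-- Skewness of `∇α` in its original slots. -/
lemma covD_alpha_skew {p : ℕ} (α : (Fin (p + 1) → Fin d) → (Fin d → ℝ) → ℝ)
    (hαsm : ∀ I, ContDiff ℝ (⊤ : ℕ∞) (α I))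
    (hskew : ∀ (σ : Equiv.Perm (Fin (p + 1))) (I : Fin (p + 1) → Fin d) (y),
      α (I ∘ σ) y = ((Equiv.Perm.sign σ : ℤ) : ℝ) * α I y)
    (σ : Equiv.Perm (Fin (p + 1))) (J : Fin (p + 2) → Fin d) (y : Fin d → ℝ) :
    covD g α (J ∘ ext0 σ) y = ((Equiv.Perm.sign σ : ℤ) : ℝ) * covD g α J y :=
  covD_skew α (fun K y => ((hαsm K).differentiable (by simp)).differentiableAt) σ
    _ (fun K y => hskew σ K y) J y

/-- Skewness of `∇∇α` in its original slots. -/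
lemma covD2_alpha_skew {p : ℕ}
    (hsm : ∀ i j, ContDiff ℝ (⊤ : ℕ∞) (fun y => g y i j)) (hdet : ∀ y, (g y).det ≠ 0)
    (α : (Fin (p + 1) → Fin d) → (Fin d → ℝ) → ℝ)
    (hαsm : ∀ I, ContDiff ℝ (⊤ : ℕ∞) (α I))
    (hskew : ∀ (σ : Equiv.Perm (Fin (p + 1))) (I : Fin (p + 1) → Fin d) (y),
      α (I ∘ σ) y = ((Equiv.Perm.sign σ : ℤ) : ℝ) * α I y)
    (σ : Equiv.Perm (Fin (p + 1))) (J : Fin (p + 3) → Fin d) (y : Fin d → ℝ) :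
    covD g (covD g α) (J ∘ ext0 (ext0 σ)) y
      = ((Equiv.Perm.sign σ : ℤ) : ℝ) * covD g (covD g α) J y :=
  covD_skew (covD g α)
    (fun K y => ((covD_contDiff hsm hdet α hαsm K).differentiable (by simp)).differentiableAt)
    (ext0 σ) _
    (fun K y => by rw [covD_alpha_skew α hαsm hskew σ K y]) J y

/-- `δα` is alternating. -/
lemma codiff_skew {p : ℕ}
    (α : (Fin (p + 1) → Fin d) → (Fin d → ℝ) → ℝ)
    (hαsm : ∀ I, ContDiff ℝ (⊤ : ℕ∞) (α I))
    (hskew : ∀ (σ : Equiv.Perm (Fin (p + 1))) (I : Fin (p + 1) → Fin d) (y),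
      α (I ∘ σ) y = ((Equiv.Perm.sign σ : ℤ) : ℝ) * α I y)
    (σ : Equiv.Perm (Fin p)) (K : Fin p → Fin d) (y : Fin d → ℝ) :
    codiff g α (K ∘ σ) y = ((Equiv.Perm.sign σ : ℤ) : ℝ) * codiff g α K y := by
  unfold codiff
  rw [mul_neg, neg_inj, Finset.mul_sum]
  refine Finset.sum_congr rfl fun b _ => ?_
  rw [Finset.mul_sum]
  refine Finset.sum_congr rfl fun c _ => ?_
  have hc : (Fin.cons b (Fin.cons c (K ∘ σ)) : Fin (p + 2) → Fin d)
      = (Fin.cons b (Fin.cons c K)) ∘ ext0 (ext0 σ) := by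
    rw [cons_comp_ext0, cons_comp_ext0]
  rw [hc, covD_alpha_skew α hαsm hskew (ext0 σ) _ y, sign_ext0]
  ring

lemma codiff_contDiff {p : ℕ}
    (hsm : ∀ i j, ContDiff ℝ (⊤ : ℕ∞) (fun y => g y i j)) (hdet : ∀ y, (g y).det ≠ 0)
    (α : (Fin (p + 1) → Fin d) → (Fin d → ℝ) → ℝ)
    (hαsm : ∀ I, ContDiff ℝ (⊤ : ℕ∞) (α I)) (K : Fin p → Fin d) :
    ContDiff ℝ (⊤ : ℕ∞) (codiff g α K) := by
  unfold codiff
  refine (ContDiff.sum fun b _ => ContDiff.sum fun c _ => ?_).neg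
  exact (ginv_contDiff hsm hdet b c).mul (covD_contDiff hsm hdet α hαsm _)

end Level2

section Compat

lemma covD_apply {q : ℕ} (T : (Fin q → Fin d) → (Fin d → ℝ) → ℝ)
    (J : Fin (q + 1) → Fin d) (y : Fin d → ℝ) :
    covD g T J y = pdD (J 0) (T (fun m => J m.succ)) y
      - ∑ m : Fin q, ∑ c, christoffel g c (J 0) (J m.succ) y *
          T (Function.update (fun k => J k.succ) m c) y := rfl

lemma sum4_swap {M : Type*} [AddCommMonoid M] {A B C D : Type*}
    [Fintype A] [Fintype B] [Fintype C] [Fintype D] (f : A → B → C → D → M) :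
    ∑ a, ∑ b, ∑ c, ∑ e, f a b c e = ∑ c, ∑ e, ∑ a, ∑ b, f a b c e := by
  rw [Finset.sum_congr rfl fun a (_ : a ∈ Finset.univ) => Finset.sum_comm, Finset.sum_comm]
  refine Finset.sum_congr rfl fun c _ => ?_
  rw [Finset.sum_congr rfl fun a (_ : a ∈ Finset.univ) => Finset.sum_comm, Finset.sum_comm]

lemma covD_codiff {p : ℕ}
    (hsym : ∀ y i j, g y i j = g y j i)
    (hsm : ∀ i j, ContDiff ℝ (⊤ : ℕ∞) (fun y => g y i j))
    (hdet : ∀ y, (g y).det ≠ 0)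
    (α : (Fin (p + 1) → Fin d) → (Fin d → ℝ) → ℝ)
    (hαsm : ∀ I, ContDiff ℝ (⊤ : ℕ∞) (α I))
    (a : Fin d) (K : Fin p → Fin d) (y : Fin d → ℝ) :
    covD g (codiff g α) (Fin.cons a K) y
      = -∑ b, ∑ c, (g y)⁻¹ b c *
          covD g (covD g α) (Fin.cons a (Fin.cons b (Fin.cons c K))) y := by
  classical
  have hGd : ∀ (b c) (y' : Fin d → ℝ), DifferentiableAt ℝ (fun z => (g z)⁻¹ b c) y' :=
    fun b c y' => ((ginv_contDiff hsm hdet b c).differentiable (by simp)).differentiableAt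
  have hT1d : ∀ (J) (y' : Fin d → ℝ), DifferentiableAt ℝ (fun z => covD g α J z) y' :=
    fun J y' => ((covD_contDiff hsm hdet α hαsm J).differentiable (by simp)).differentiableAt
  -- expand the pdD of δα
  have hpd : pdD a (codiff g α K) y
      = -∑ b, ∑ c, (pdD a (fun z => (g z)⁻¹ b c) y *
            covD g α (Fin.cons b (Fin.cons c K)) y
          + (g y)⁻¹ b c * pdD a (fun z => covD g α (Fin.cons b (Fin.cons c K)) z) y) := by
    have h1 : codiff g α K = fun z => -∑ b, ∑ c, (g z)⁻¹ b c *
        covD g α (Fin.cons b (Fin.cons c K)) z := rfl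
    rw [h1, pdD_neg, neg_inj,
      pdD_sum a (fun b _ => DifferentiableAt.fun_sum fun c _ => ((hGd b c y).fun_mul (hT1d _ y)))]
    refine Finset.sum_congr rfl fun b _ => ?_
    rw [pdD_sum a (fun c _ => (hGd b c y).fun_mul (hT1d _ y))]
    exact Finset.sum_congr rfl fun c _ => pdD_mul a (hGd b c y) (hT1d _ y)
  -- expand the RHS second covariant derivative
  have hR : ∀ b c, covD g (covD g α) (Fin.cons a (Fin.cons b (Fin.cons c K))) y
      = pdD a (fun z => covD g α (Fin.cons b (Fin.cons c K)) z) y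
        - ∑ e, christoffel g e a b y * covD g α (Fin.cons e (Fin.cons c K)) y
        - ∑ e, christoffel g e a c y * covD g α (Fin.cons b (Fin.cons e K)) y
        - ∑ m : Fin p, ∑ e, christoffel g e a (K m) y *
            covD g α (Fin.cons b (Fin.cons c (Function.update K m e))) y := by
    intro b c
    rw [covD_apply (covD g α) (Fin.cons a (Fin.cons b (Fin.cons c K))) y]
    simp only [Fin.cons_zero, Fin.cons_succ]
    rw [Fin.sum_univ_succ (f := fun m : Fin (p + 2) => ∑ e,
      christoffel g e a ((Fin.cons b (Fin.cons c K) : Fin (p + 2) → Fin d) m) y *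
        covD g α (Function.update (Fin.cons b (Fin.cons c K)) m e) y)]
    rw [Fin.sum_univ_succ (f := fun m : Fin (p + 1) => ∑ e,
      christoffel g e a ((Fin.cons b (Fin.cons c K) : Fin (p + 2) → Fin d) m.succ) y *
        covD g α (Function.update (Fin.cons b (Fin.cons c K)) m.succ e) y)]
    simp only [Fin.cons_zero, Fin.cons_succ, Fin.update_cons_zero, ← Fin.cons_update]
    ring
  -- expand the LHS
  rw [covD_apply (codiff g α) (Fin.cons a K) y]
  simp only [Fin.cons_zero, Fin.cons_succ]
  rw [hpd]
  have hcompat : ∀ b c, pdD a (fun z => (g z)⁻¹ b c) y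
      = -∑ e, (christoffel g b a e y * (g y)⁻¹ e c
          + christoffel g c a e y * (g y)⁻¹ b e) := fun b c => compat hsym hsm hdet a b c y
  -- expand codiff in the Christoffel terms of the LHS
  have hcd : ∀ (m : Fin p) (e : Fin d), codiff g α (Function.update K m e) y
      = -∑ b, ∑ c, (g y)⁻¹ b c *
          covD g α (Fin.cons b (Fin.cons c (Function.update K m e))) y := fun _ _ => rfl
  simp only [hcompat, hcd, hR]
  -- split the products of sums on both sides
  have e1 : ∀ b c : Fin d,
      (-∑ e, (christoffel g b a e y * (g y)⁻¹ e c + christoffel g c a e y * (g y)⁻¹ b e)) *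
          covD g α (Fin.cons b (Fin.cons c K)) y
        + (g y)⁻¹ b c * pdD a (fun z => covD g α (Fin.cons b (Fin.cons c K)) z) y
      = (g y)⁻¹ b c * pdD a (fun z => covD g α (Fin.cons b (Fin.cons c K)) z) y
        - (∑ e, christoffel g b a e y * (g y)⁻¹ e c *
            covD g α (Fin.cons b (Fin.cons c K)) y)
        - (∑ e, christoffel g c a e y * (g y)⁻¹ b e *
            covD g α (Fin.cons b (Fin.cons c K)) y) := by
    intro b c
    rw [Finset.sum_add_distrib, ← Finset.sum_mul, ← Finset.sum_mul]
    ring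
  have e2 : ∀ b c : Fin d,
      (g y)⁻¹ b c * (pdD a (fun z => covD g α (Fin.cons b (Fin.cons c K)) z) y
          - ∑ e, christoffel g e a b y * covD g α (Fin.cons e (Fin.cons c K)) y
          - ∑ e, christoffel g e a c y * covD g α (Fin.cons b (Fin.cons e K)) y
          - ∑ m : Fin p, ∑ e, christoffel g e a (K m) y *
              covD g α (Fin.cons b (Fin.cons c (Function.update K m e))) y)
      = (g y)⁻¹ b c * pdD a (fun z => covD g α (Fin.cons b (Fin.cons c K)) z) y
        - (∑ e, (g y)⁻¹ b c * (christoffel g e a b y *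
            covD g α (Fin.cons e (Fin.cons c K)) y))
        - (∑ e, (g y)⁻¹ b c * (christoffel g e a c y *
            covD g α (Fin.cons b (Fin.cons e K)) y))
        - (∑ m : Fin p, ∑ e, (g y)⁻¹ b c * (christoffel g e a (K m) y *
            covD g α (Fin.cons b (Fin.cons c (Function.update K m e))) y)) := by
    intro b c
    rw [mul_sub, mul_sub, mul_sub, Finset.mul_sum, Finset.mul_sum, Finset.mul_sum]
    congr 1
    refine Finset.sum_congr rfl fun m _ => ?_
    rw [Finset.mul_sum]
  simp only [e1, e2, mul_neg]
  simp only [Finset.sum_sub_distrib, Finset.sum_neg_distrib, neg_neg]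
  -- the three bridge identities
  have bridge1 :
      ∑ b, ∑ c, ∑ e, christoffel g b a e y * (g y)⁻¹ e c *
          covD g α (Fin.cons b (Fin.cons c K)) y
      = ∑ b, ∑ c, ∑ e, (g y)⁻¹ b c * (christoffel g e a b y *
          covD g α (Fin.cons e (Fin.cons c K)) y) := by
    calc ∑ b, ∑ c, ∑ e, christoffel g b a e y * (g y)⁻¹ e c *
          covD g α (Fin.cons b (Fin.cons c K)) y
        = ∑ b, ∑ c, ∑ e, (fun b' c' e' => (g y)⁻¹ b' c' * (christoffel g e' a b' y *
            covD g α (Fin.cons e' (Fin.cons c' K)) y)) e c b := by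
          refine Finset.sum_congr rfl fun b _ => Finset.sum_congr rfl fun c _ =>
            Finset.sum_congr rfl fun e _ => ?_
          simp only []
          ring
      _ = ∑ b, ∑ c, ∑ e, (g y)⁻¹ b c * (christoffel g e a b y *
            covD g α (Fin.cons e (Fin.cons c K)) y) :=
          (sum3_swap13 (fun b' c' e' => (g y)⁻¹ b' c' * (christoffel g e' a b' y *
            covD g α (Fin.cons e' (Fin.cons c' K)) y))).symm
  have bridge2 :
      ∑ b, ∑ c, ∑ e, christoffel g c a e y * (g y)⁻¹ b e *
          covD g α (Fin.cons b (Fin.cons c K)) y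
      = ∑ b, ∑ c, ∑ e, (g y)⁻¹ b c * (christoffel g e a c y *
          covD g α (Fin.cons b (Fin.cons e K)) y) := by
    refine Finset.sum_congr rfl fun b _ => ?_
    calc ∑ c, ∑ e, christoffel g c a e y * (g y)⁻¹ b e *
          covD g α (Fin.cons b (Fin.cons c K)) y
        = ∑ c, ∑ e, (fun c' e' => (g y)⁻¹ b c' * (christoffel g e' a c' y *
            covD g α (Fin.cons b (Fin.cons e' K)) y)) e c := by
          refine Finset.sum_congr rfl fun c _ => Finset.sum_congr rfl fun e _ => ?_
          simp only []
          ring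
      _ = ∑ c, ∑ e, (g y)⁻¹ b c * (christoffel g e a c y *
            covD g α (Fin.cons b (Fin.cons e K)) y) :=
          (Finset.sum_comm).symm
  have bridge3 :
      ∑ m : Fin p, ∑ e, christoffel g e a (K m) y *
          ∑ b, ∑ c, (g y)⁻¹ b c *
            covD g α (Fin.cons b (Fin.cons c (Function.update K m e))) y
      = ∑ b, ∑ c, ∑ m : Fin p, ∑ e, (g y)⁻¹ b c * (christoffel g e a (K m) y *
          covD g α (Fin.cons b (Fin.cons c (Function.update K m e))) y) := by
    calc ∑ m : Fin p, ∑ e, christoffel g e a (K m) y *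
          ∑ b, ∑ c, (g y)⁻¹ b c *
            covD g α (Fin.cons b (Fin.cons c (Function.update K m e))) y
        = ∑ m : Fin p, ∑ e, ∑ b, ∑ c, (fun b' c' (m' : Fin p) e' => (g y)⁻¹ b' c' *
            (christoffel g e' a (K m') y *
              covD g α (Fin.cons b' (Fin.cons c' (Function.update K m' e'))) y)) b c m e := by
          refine Finset.sum_congr rfl fun m _ => Finset.sum_congr rfl fun e _ => ?_
          rw [Finset.mul_sum]
          refine Finset.sum_congr rfl fun b _ => ?_
          rw [Finset.mul_sum]
          refine Finset.sum_congr rfl fun c _ => ?_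
          simp only []
          ring
      _ = ∑ b, ∑ c, ∑ m : Fin p, ∑ e, (g y)⁻¹ b c * (christoffel g e a (K m) y *
            covD g α (Fin.cons b (Fin.cons c (Function.update K m e))) y) :=
          (sum4_swap (fun b' c' (m' : Fin p) e' => (g y)⁻¹ b' c' *
            (christoffel g e' a (K m') y *
              covD g α (Fin.cons b' (Fin.cons c' (Function.update K m' e'))) y))).symm
  rw [bridge1, bridge2, bridge3]
  ring

end Compat

section Assemble

lemma sum3_cycle {M : Type*} [AddCommMonoid M] {A B C : Type*}
    [Fintype A] [Fintype B] [Fintype C] (f : A → B → C → M) :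
    ∑ a, ∑ b, ∑ c, f a b c = ∑ b, ∑ c, ∑ a, f a b c := by
  rw [Finset.sum_comm]
  exact Finset.sum_congr rfl fun b _ => Finset.sum_comm

lemma neg_one_pow_pair (n : ℕ) (x : ℝ) : (-1 : ℝ) ^ n * ((-1 : ℝ) ^ n * x) = x := by
  rw [← mul_assoc, ← pow_add, Even.neg_one_pow ⟨n, rfl⟩, one_mul]

set_option maxHeartbeats 1000000 in
lemma covD_extd {p : ℕ}
    (hsym : ∀ y i j, g y i j = g y j i)
    (hsm : ∀ i j, ContDiff ℝ (⊤ : ℕ∞) (fun y => g y i j))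
    (hdet : ∀ y, (g y).det ≠ 0)
    (α : (Fin (p + 1) → Fin d) → (Fin d → ℝ) → ℝ)
    (hαsm : ∀ I, ContDiff ℝ (⊤ : ℕ∞) (α I))
    (hskew : ∀ (σ : Equiv.Perm (Fin (p + 1))) (I : Fin (p + 1) → Fin d) (y),
      α (I ∘ σ) y = ((Equiv.Perm.sign σ : ℤ) : ℝ) * α I y)
    (b : Fin d) (J' : Fin (p + 2) → Fin d) (y : Fin d → ℝ) :
    covD g (extd α) (Fin.cons b J') y
      = ∑ i : Fin (p + 2), (-1 : ℝ) ^ (i : ℕ) *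
          covD g (covD g α) (Fin.cons b (J' ∘ ⇑(i.cycleRange⁻¹))) y := by
  have hT1d : ∀ (J : Fin (p + 2) → Fin d) (y' : Fin d → ℝ),
      DifferentiableAt ℝ (fun z => covD g α J z) y' :=
    fun J y' => ((covD_contDiff hsm hdet α hαsm J).differentiable (by simp)).differentiableAt
  have hfam : extd α = fun (Jt : Fin (p + 2) → Fin d) (y' : Fin d → ℝ) =>
      ∑ i : Fin (p + 2), (-1 : ℝ) ^ (i : ℕ) * covD g α (Jt ∘ ⇑(i.cycleRange⁻¹)) y' := by
    funext Jt y'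
    rw [extd_eq_alt hsym α hskew Jt y']
    refine Finset.sum_congr rfl fun i _ => ?_
    rw [comp_cycleRange_inv]
  rw [hfam, covD_sum Finset.univ
    (fun (i : Fin (p + 2)) K y' => (-1 : ℝ) ^ (i : ℕ) * covD g α (K ∘ ⇑(i.cycleRange⁻¹)) y')
    (fun t K y' => ((hT1d _ y').const_mul _)) (Fin.cons b J') y]
  refine Finset.sum_congr rfl fun i _ => ?_
  rw [covD_const_mul (fun K y' => covD g α (K ∘ ⇑(i.cycleRange⁻¹)) y')
    (fun K y' => hT1d _ y') ((-1 : ℝ) ^ (i : ℕ)) (Fin.cons b J') y]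
  congr 1
  rw [covD_comp_perm (covD g α) (i.cycleRange⁻¹) (Fin.cons b J') y, cons_comp_ext0]

/-- skewness of `∇∇α` under the cycle moving a fresh index to slot `m`. -/
lemma covD2_cycle {p : ℕ}
    (hsm : ∀ i j, ContDiff ℝ (⊤ : ℕ∞) (fun y => g y i j))
    (hdet : ∀ y, (g y).det ≠ 0)
    (α : (Fin (p + 1) → Fin d) → (Fin d → ℝ) → ℝ)
    (hαsm : ∀ I, ContDiff ℝ (⊤ : ℕ∞) (α I))
    (hskew : ∀ (σ : Equiv.Perm (Fin (p + 1))) (I : Fin (p + 1) → Fin d) (y),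
      α (I ∘ σ) y = ((Equiv.Perm.sign σ : ℤ) : ℝ) * α I y)
    (x w : Fin d) (I : Fin (p + 1) → Fin d) (m : Fin (p + 1)) (c : Fin d)
    (y : Fin d → ℝ) :
    covD g (covD g α) (Fin.cons x (Fin.cons w (Fin.cons c (I ∘ m.succAbove)))) y
      = (-1 : ℝ) ^ (m : ℕ) *
        covD g (covD g α) (Fin.cons x (Fin.cons w (Function.update I m c))) y := by
  have hcyc : (Fin.cons c (I ∘ m.succAbove) : Fin (p + 1) → Fin d)
      = (Function.update I m c) ∘ ⇑(m.cycleRange⁻¹) := by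
    rw [comp_cycleRange_inv, Function.update_self, update_del]
  have hcons : (Fin.cons x (Fin.cons w ((Function.update I m c) ∘ ⇑(m.cycleRange⁻¹)))
        : Fin (p + 3) → Fin d)
      = (Fin.cons x (Fin.cons w (Function.update I m c))) ∘ ext0 (ext0 (m.cycleRange⁻¹)) := by
    rw [cons_comp_ext0, cons_comp_ext0]
  rw [hcyc, hcons, covD2_alpha_skew hsm hdet α hαsm hskew (m.cycleRange⁻¹) _ y]
  congr 1
  rw [Equiv.Perm.sign_inv, Fin.sign_cycleRange]
  exact units_cast_pow (m : ℕ)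

end Assemble

end Weitz

/-- Weitzenböck formula: for any `p`-form `α` (here of degree
`p+1 ≥ 1`; for degree `0` the curvature term is empty and the statement is the
equality `□ = Δ` on scalars), `□α = Δα + j^a i^b R(e_a,e_b) α`, with
`□ = -(dδ + δd)` the Laplace-de Rham operator, `Δ = tr ∇²` the Laplace-Beltrami
Laplacian, and `R(u,v) = ∇_u∇_v - ∇_v∇_u - ∇_{[u,v]}` the curvature operator of
the Levi-Civita connection. -/
theorem weitzenboeck {d : ℕ}
    (g : (Fin d → ℝ) → Matrix (Fin d) (Fin d) ℝ)
    (hsym : ∀ y i j, g y i j = g y j i)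
    (hsm : ∀ i j, ContDiff ℝ (⊤ : ℕ∞) (fun y => g y i j))
    (hdet : ∀ y, (g y).det ≠ 0)
    {p : ℕ} (α : (Fin (p + 1) → Fin d) → (Fin d → ℝ) → ℝ)
    (hαsm : ∀ I, ContDiff ℝ (⊤ : ℕ∞) (α I))
    (hskew : ∀ (σ : Equiv.Perm (Fin (p + 1))) (I : Fin (p + 1) → Fin d) (y),
      α (I ∘ σ) y = ((Equiv.Perm.sign σ : ℤ) : ℝ) * α I y)
    (hzero : ∀ (I : Fin (p + 1) → Fin d) (y), ¬Function.Injective I → α I y = 0) :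
    ∀ (I : Fin (p + 1) → Fin d) (y : Fin d → ℝ),
      -(extd (codiff g α) I y + codiff g (extd α) I y)
        = lapBeltrami g α I y + weitzCurvTerm g α I y := by
  intro I y
  have hδskew := Weitz.codiff_skew (g := g) α hαsm hskew
  have hC2 := Weitz.covD2_cycle (g := g) hsm hdet α hαsm hskew
  -- the dδ part
  have hE : extd (codiff g α) I y
      = -∑ j : Fin (p + 1), ∑ b, ∑ c, (g y)⁻¹ b c *
          covD g (covD g α) (Fin.cons (I j) (Fin.cons b (Function.update I j c))) y := by
    rw [Weitz.extd_eq_alt hsym (codiff g α) hδskew I y, ← Finset.sum_neg_distrib]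
    refine Finset.sum_congr rfl fun j _ => ?_
    rw [Weitz.covD_codiff hsym hsm hdet α hαsm (I j) (I ∘ j.succAbove) y]
    have h1 : ∑ b, ∑ c, (g y)⁻¹ b c *
        covD g (covD g α) (Fin.cons (I j) (Fin.cons b (Fin.cons c (I ∘ j.succAbove)))) y
        = (-1 : ℝ) ^ (j : ℕ) * ∑ b, ∑ c, (g y)⁻¹ b c *
            covD g (covD g α) (Fin.cons (I j) (Fin.cons b (Function.update I j c))) y := by
      rw [Finset.mul_sum]
      refine Finset.sum_congr rfl fun b _ => ?_
      rw [Finset.mul_sum]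
      refine Finset.sum_congr rfl fun c _ => ?_
      rw [hC2 (I j) b I j c y]
      ring
    rw [h1, mul_neg, Weitz.neg_one_pow_pair]
  -- the δd part
  have hC : codiff g (extd α) I y
      = -∑ b, ∑ c, (g y)⁻¹ b c *
          covD g (covD g α) (Fin.cons b (Fin.cons c I)) y
        + ∑ b, ∑ c, ∑ j : Fin (p + 1), (g y)⁻¹ b c *
          covD g (covD g α) (Fin.cons b (Fin.cons (I j) (Function.update I j c))) y := by
    have h0 : codiff g (extd α) I y = -∑ b, ∑ c, (g y)⁻¹ b c *
        covD g (extd α) (Fin.cons b (Fin.cons c I)) y := rfl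
    rw [h0]
    have h1 : ∀ b c : Fin d, covD g (extd α) (Fin.cons b (Fin.cons c I)) y
        = covD g (covD g α) (Fin.cons b (Fin.cons c I)) y
          - ∑ j : Fin (p + 1),
              covD g (covD g α) (Fin.cons b (Fin.cons (I j) (Function.update I j c))) y := by
      intro b c
      rw [Weitz.covD_extd hsym hsm hdet α hαsm hskew b (Fin.cons c I) y]
      rw [Fin.sum_univ_succ (f := fun i : Fin (p + 2) => (-1 : ℝ) ^ (i : ℕ) *
        covD g (covD g α) (Fin.cons b ((Fin.cons c I) ∘ ⇑(i.cycleRange⁻¹))) y)]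
      have hz : (Fin.cons c I : Fin (p + 2) → Fin d)
          ∘ ⇑(((0 : Fin (p + 2)).cycleRange)⁻¹) = Fin.cons c I := by
        rw [Fin.cycleRange_zero, inv_one, Equiv.Perm.coe_one, Function.comp_id]
      have hsucc : ∀ j : Fin (p + 1), (Fin.cons c I : Fin (p + 2) → Fin d)
          ∘ ⇑((j.succ).cycleRange⁻¹)
          = Fin.cons (I j) (Fin.cons c (I ∘ j.succAbove)) := by
        intro j
        rw [Weitz.comp_cycleRange_inv (Fin.cons c I) j.succ, Fin.cons_succ,
          Weitz.cons_comp_succ]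
      rw [hz]
      simp only [hsucc]
      have h2 : ∀ j : Fin (p + 1), (-1 : ℝ) ^ ((j.succ : Fin (p + 2)) : ℕ) *
          covD g (covD g α)
            (Fin.cons b (Fin.cons (I j) (Fin.cons c (I ∘ j.succAbove)))) y
          = -covD g (covD g α)
              (Fin.cons b (Fin.cons (I j) (Function.update I j c))) y := by
        intro j
        rw [hC2 b (I j) I j c y, Fin.val_succ, pow_succ]
        have h3 := Weitz.neg_one_pow_pair (j : ℕ)
          (covD g (covD g α) (Fin.cons b (Fin.cons (I j) (Function.update I j c))) y)
        linear_combination -h3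
      simp only [h2]
      simp only [Fin.val_zero, pow_zero, one_mul]
      rw [Finset.sum_neg_distrib, ← sub_eq_add_neg]
    simp only [h1]
    have h3 : ∀ b c : Fin d, (g y)⁻¹ b c *
        (covD g (covD g α) (Fin.cons b (Fin.cons c I)) y
          - ∑ j : Fin (p + 1),
              covD g (covD g α) (Fin.cons b (Fin.cons (I j) (Function.update I j c))) y)
        = (g y)⁻¹ b c * covD g (covD g α) (Fin.cons b (Fin.cons c I)) y
          - ∑ j : Fin (p + 1), (g y)⁻¹ b c *
              covD g (covD g α) (Fin.cons b (Fin.cons (I j) (Function.update I j c))) y := by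
      intro b c
      rw [mul_sub, Finset.mul_sum]
    simp only [h3, Finset.sum_sub_distrib]
    ring
  rw [hE, hC]
  have hW : weitzCurvTerm g α I y
      = ∑ b, ∑ c, ∑ m : Fin (p + 1), (g y)⁻¹ b c *
          covD g (covD g α) (Fin.cons (I m) (Fin.cons b (Function.update I m c))) y
        - ∑ b, ∑ c, ∑ m : Fin (p + 1), (g y)⁻¹ b c *
          covD g (covD g α) (Fin.cons b (Fin.cons (I m) (Function.update I m c))) y := by
    unfold weitzCurvTerm
    simp only [mul_sub, Finset.sum_sub_distrib]
  have hL : lapBeltrami g α I y = ∑ b, ∑ c, (g y)⁻¹ b c *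
      covD g (covD g α) (Fin.cons b (Fin.cons c I)) y := rfl
  rw [hW, hL]
  rw [Weitz.sum3_cycle (fun j b c => (g y)⁻¹ b c *
    covD g (covD g α) (Fin.cons (I j) (Fin.cons b (Function.update I j c))) y)]
  ring
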